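/- arXiv:2501.01917 — 5 statements merged into one kernel-verified Lean document; each statement's English description precedes it below -/
import Mathlib

section
/- Let H_S be a Hermitian d×d complex matrix, H_SE a Hermitian operator on ℂ^d ⊗ ℂ^D, and U_0, …, U_{n−1} unitary d×d matrices such that (i) the effective system Hamiltonian H_S^eff := (1/n) Σ_{k=0}^{n−1} U_k H_S U_k† is not a scalar multiple of the identity, and (ii) (1/n) Σ_{k=0}^{n−1} (U_k ⊗ 1_D) H_SE (U_k† ⊗ 1_D) = c (1_d ⊗ J_E) for some real constant c and Hermitian D×D matrix J_E. Define the mixed unitary channel Φ(X) := (1/n) Σ_{k=0}^{n−1} U_k X U_k†. Then Φ(H_S) is not a scalar multiple of the identity, and for every unit vector ψ ∈ ℂ^D: (a) Tr[(Φ(H_S) − (Tr H_S / d)·1_d) · Φ(⟨ψ|H_SE|ψ⟩_E)] = 0, and (b) for every orthonormal eigenbasis {v_i} of Φ(H_S), the diagonal entries ⟨v_i, Φ(⟨ψ|H_SE|ψ⟩_E) v_i⟩ are all equal. -/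
open Matrix Complex
open scoped Kronecker

/-- The partial expectation `⟨ψ|X|ψ⟩_E` of an operator `X` on `ℂ^d ⊗ ℂ^D`
with respect to an environment vector `ψ ∈ ℂ^D`. -/
noncomputable def pexp {d D : ℕ} (X : Matrix (Fin d × Fin D) (Fin d × Fin D) ℂ)
    (ψ : Fin D → ℂ) : Matrix (Fin d) (Fin d) ℂ :=
  fun i j => ∑ a, ∑ b, star (ψ a) * X (i, a) (j, b) * ψ b

/-- The equal-weight mixed unitary channel `X ↦ (1/n) Σ_k U_k X U_k†`. -/
noncomputable def mixChan {d n : ℕ} (U : Fin n → Matrix (Fin d) (Fin d) ℂ)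
    (X : Matrix (Fin d) (Fin d) ℂ) : Matrix (Fin d) (Fin d) ℂ :=
  ((n : ℂ))⁻¹ • ∑ k, U k * X * (U k)ᴴ

/-- The channel `X ↦ (1/n) Σ_k (U_k ⊗ 1_D) X (U_k† ⊗ 1_D)` on the joint system. -/
noncomputable def mixChanE {d D n : ℕ} (U : Fin n → Matrix (Fin d) (Fin d) ℂ)
    (X : Matrix (Fin d × Fin D) (Fin d × Fin D) ℂ) :
    Matrix (Fin d × Fin D) (Fin d × Fin D) ℂ :=
  ((n : ℂ))⁻¹ • ∑ k, (U k ⊗ₖ (1 : Matrix (Fin D) (Fin D) ℂ)) * X *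
    ((U k)ᴴ ⊗ₖ (1 : Matrix (Fin D) (Fin D) ℂ))

/-! Since partial expectation intertwines the two channels, `Φ(⟨ψ|H_SE|ψ⟩_E) = ⟨ψ|Φ_E(H_SE)|ψ⟩_E`,
and by (ii) this is the scalar `c ⟨ψ|J_E|ψ⟩` times the identity. Hence (a) reduces to
`Φ(H_S) - (Tr H_S / d) 1` being traceless, which holds because a mixed unitary channel preserves
the trace, and (b) to the eigenvectors being normalized. -/

section PartialExpectation

variable {d D : ℕ}

lemma pexp_smul (r : ℂ) (X : Matrix (Fin d × Fin D) (Fin d × Fin D) ℂ) (ψ : Fin D → ℂ) :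
    pexp (r • X) ψ = r • pexp X ψ := by
  ext i j
  simp only [pexp, Matrix.smul_apply, smul_eq_mul, Finset.mul_sum]
  exact Finset.sum_congr rfl fun a _ => Finset.sum_congr rfl fun b _ => by ring

lemma pexp_sum {ι : Type*} (s : Finset ι) (X : ι → Matrix (Fin d × Fin D) (Fin d × Fin D) ℂ)
    (ψ : Fin D → ℂ) : pexp (∑ k ∈ s, X k) ψ = ∑ k ∈ s, pexp (X k) ψ := by
  ext i j
  simp only [pexp, Matrix.sum_apply, Finset.mul_sum, Finset.sum_mul]
  conv_rhs => rw [Finset.sum_comm]; enter [2, a]; rw [Finset.sum_comm]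

lemma pexp_kronecker_one_mul (A : Matrix (Fin d) (Fin d) ℂ)
    (X : Matrix (Fin d × Fin D) (Fin d × Fin D) ℂ) (ψ : Fin D → ℂ) :
    pexp ((A ⊗ₖ (1 : Matrix (Fin D) (Fin D) ℂ)) * X) ψ = A * pexp X ψ := by
  ext i j
  simp only [pexp, mul_apply, Fintype.sum_prod_type, kroneckerMap_apply, one_apply, mul_ite,
    mul_one, mul_zero, ite_mul, zero_mul, Finset.sum_ite_eq, Finset.mem_univ, if_true,
    Finset.mul_sum, Finset.sum_mul]
  conv_rhs => rw [Finset.sum_comm]; enter [2, a]; rw [Finset.sum_comm]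
  exact Finset.sum_congr rfl fun a _ => Finset.sum_congr rfl fun b _ =>
    Finset.sum_congr rfl fun p _ => by ring

lemma pexp_mul_kronecker_one (B : Matrix (Fin d) (Fin d) ℂ)
    (X : Matrix (Fin d × Fin D) (Fin d × Fin D) ℂ) (ψ : Fin D → ℂ) :
    pexp (X * (B ⊗ₖ (1 : Matrix (Fin D) (Fin D) ℂ))) ψ = pexp X ψ * B := by
  ext i j
  simp only [pexp, mul_apply, Fintype.sum_prod_type, kroneckerMap_apply, one_apply, mul_ite,
    mul_one, mul_zero, Finset.sum_ite_eq', Finset.mem_univ, if_true,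
    Finset.mul_sum, Finset.sum_mul]
  conv_rhs => rw [Finset.sum_comm]; enter [2, a]; rw [Finset.sum_comm]
  exact Finset.sum_congr rfl fun a _ => Finset.sum_congr rfl fun b _ =>
    Finset.sum_congr rfl fun p _ => by ring

lemma pexp_one_kronecker (J : Matrix (Fin D) (Fin D) ℂ) (ψ : Fin D → ℂ) :
    pexp ((1 : Matrix (Fin d) (Fin d) ℂ) ⊗ₖ J) ψ =
      (star ψ ⬝ᵥ J *ᵥ ψ) • (1 : Matrix (Fin d) (Fin d) ℂ) := by
  ext i j
  by_cases h : i = j <;>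
    simp [h, pexp, one_apply, dotProduct, mulVec, Finset.mul_sum, mul_assoc]

end PartialExpectation

section MixedUnitaryChannel

variable {d D n : ℕ} (U : Fin n → Matrix (Fin d) (Fin d) ℂ)

lemma pexp_mixChanE (X : Matrix (Fin d × Fin D) (Fin d × Fin D) ℂ) (ψ : Fin D → ℂ) :
    pexp (mixChanE U X) ψ = mixChan U (pexp X ψ) := by
  simp only [mixChanE, mixChan, pexp_smul, pexp_sum, pexp_mul_kronecker_one,
    pexp_kronecker_one_mul]

lemma trace_mixChan (hn : n ≠ 0) (hU : ∀ k, U k * (U k)ᴴ = 1) (X : Matrix (Fin d) (Fin d) ℂ) :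
    (mixChan U X).trace = X.trace := by
  have hconj (k : Fin n) : (U k * X * (U k)ᴴ).trace = X.trace := by
    rw [trace_mul_cycle, mul_eq_one_comm.mp (hU k), Matrix.one_mul]
  simp only [mixChan, trace_smul, trace_sum, hconj, Finset.sum_const, Finset.card_univ,
    Fintype.card_fin, nsmul_eq_mul, smul_eq_mul]
  field_simp

end MixedUnitaryChannel

lemma Matrix.trace_sub_trace_div_card_smul_one {ι K : Type*} [Fintype ι] [DecidableEq ι]
    [Field K] [CharZero K] (A : Matrix ι ι K) :
    (A - (A.trace / Fintype.card ι) • (1 : Matrix ι ι K)).trace = 0 := by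
  rw [trace_sub, trace_smul, trace_one, smul_eq_mul]
  rcases isEmpty_or_nonempty ι with hι | hι
  · simp [trace_eq_zero_of_isEmpty]
  · rw [div_mul_cancel₀ _ (Nat.cast_ne_zero.mpr Fintype.card_ne_zero), sub_self]

theorem stmt_0_general {d D n : ℕ} (hn : 0 < n)
    (HS : Matrix (Fin d) (Fin d) ℂ)
    (HSE : Matrix (Fin d × Fin D) (Fin d × Fin D) ℂ)
    (U : Fin n → Matrix (Fin d) (Fin d) ℂ)
    (hU : ∀ k, U k * (U k)ᴴ = 1)
    -- (i) the effective system Hamiltonian is not a scalar multiple of the identity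
    (hi : ¬ ∃ c : ℂ, mixChan U HS = c • (1 : Matrix (Fin d) (Fin d) ℂ))
    -- (ii) the effective interaction is `c (1_d ⊗ J_E)`
    (hii : ∃ (c : ℝ) (JE : Matrix (Fin D) (Fin D) ℂ), JE.IsHermitian ∧
      mixChanE U HSE = (c : ℂ) • ((1 : Matrix (Fin d) (Fin d) ℂ) ⊗ₖ JE)) :
    -- Φ(H_S) is not a scalar multiple of the identity
    (¬ ∃ c : ℂ, mixChan U HS = c • (1 : Matrix (Fin d) (Fin d) ℂ)) ∧
    ∀ ψ : Fin D → ℂ, star ψ ⬝ᵥ ψ = 1 →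
      -- (a) the orthogonality condition
      (Matrix.trace ((mixChan U HS - (HS.trace / (d : ℂ)) • (1 : Matrix (Fin d) (Fin d) ℂ)) *
          mixChan U (pexp HSE ψ)) = 0) ∧
      -- (b) constant diagonal in every orthonormal eigenbasis of Φ(H_S)
      (∀ v : Fin d → (Fin d → ℂ),
        (∀ i j, star (v i) ⬝ᵥ v j = if i = j then (1 : ℂ) else 0) →
        (∀ i, ∃ μ : ℝ, (mixChan U HS).mulVec (v i) = (μ : ℂ) • v i) →
        ∀ i j, star (v i) ⬝ᵥ (mixChan U (pexp HSE ψ)).mulVec (v i) =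
          star (v j) ⬝ᵥ (mixChan U (pexp HSE ψ)).mulVec (v j)) := by
  obtain ⟨c, J, -, hE⟩ := hii
  refine ⟨hi, fun ψ _ => ?_⟩
  have hscalar : mixChan U (pexp HSE ψ) = ((c : ℂ) * (star ψ ⬝ᵥ J *ᵥ ψ)) • 1 := by
    rw [← pexp_mixChanE, hE, pexp_smul, pexp_one_kronecker, smul_smul]
  refine ⟨?_, fun v hv _ i j => ?_⟩
  · have htraceless := trace_sub_trace_div_card_smul_one (mixChan U HS)
    rw [Fintype.card_fin, trace_mixChan U hn.ne' hU] at htraceless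
    rw [hscalar, Matrix.mul_smul, Matrix.mul_one, trace_smul, htraceless, smul_zero]
  · simp only [hscalar, smul_mulVec, one_mulVec, dotProduct_smul, hv, if_true]

theorem stmt_0 {d D n : ℕ} (hd : 0 < d) (hn : 0 < n)
    (HS : Matrix (Fin d) (Fin d) ℂ) (hHS : HS.IsHermitian)
    (HSE : Matrix (Fin d × Fin D) (Fin d × Fin D) ℂ) (hHSE : HSE.IsHermitian)
    (U : Fin n → Matrix (Fin d) (Fin d) ℂ)
    (hU : ∀ k, U k * (U k)ᴴ = 1)
    -- (i) the effective system Hamiltonian is not a scalar multiple of the identity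
    (hi : ¬ ∃ c : ℂ, mixChan U HS = c • (1 : Matrix (Fin d) (Fin d) ℂ))
    -- (ii) the effective interaction is `c (1_d ⊗ J_E)`
    (hii : ∃ (c : ℝ) (JE : Matrix (Fin D) (Fin D) ℂ), JE.IsHermitian ∧
      mixChanE U HSE = (c : ℂ) • ((1 : Matrix (Fin d) (Fin d) ℂ) ⊗ₖ JE)) :
    -- Φ(H_S) is not a scalar multiple of the identity
    (¬ ∃ c : ℂ, mixChan U HS = c • (1 : Matrix (Fin d) (Fin d) ℂ)) ∧
    ∀ ψ : Fin D → ℂ, star ψ ⬝ᵥ ψ = 1 →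
      -- (a) the orthogonality condition
      (Matrix.trace ((mixChan U HS - (HS.trace / (d : ℂ)) • (1 : Matrix (Fin d) (Fin d) ℂ)) *
          mixChan U (pexp HSE ψ)) = 0) ∧
      -- (b) constant diagonal in every orthonormal eigenbasis of Φ(H_S)
      (∀ v : Fin d → (Fin d → ℂ),
        (∀ i j, star (v i) ⬝ᵥ v j = if i = j then (1 : ℂ) else 0) →
        (∀ i, ∃ μ : ℝ, (mixChan U HS).mulVec (v i) = (μ : ℂ) • v i) →
        ∀ i j, star (v i) ⬝ᵥ (mixChan U (pexp HSE ψ)).mulVec (v i) =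
          star (v j) ⬝ᵥ (mixChan U (pexp HSE ψ)).mulVec (v j)) :=
  stmt_0_general hn HS HSE U hU hi hii
end

section
/- Let H_S be a Hermitian d×d complex matrix that is not a scalar multiple of the identity, and let H_SE be a Hermitian operator on ℂ^d ⊗ ℂ^D. Suppose there exists an orthonormal eigenbasis {v_1, …, v_d} of H_S such that for every unit vector ψ ∈ ℂ^D the diagonal entries ⟨v_i, ⟨ψ|H_SE|ψ⟩_E v_i⟩, i = 1, …, d, are all equal (with common value possibly depending on ψ), and that Tr[(H_S − (Tr H_S / d)·1_d) · ⟨ψ|H_SE|ψ⟩_E] = 0 for every unit vector ψ ∈ ℂ^D. Then, with ω = e^{2πi/d} and U_j := Σ_{i=1}^{d} ω^{ij} |v_i⟩⟨v_i| for j = 0, …, d−1, the matrices U_j are unitary, (1/d) Σ_{j=0}^{d−1} U_j H_S U_j† = H_S (hence not a scalar multiple of the identity), and (1/d) Σ_{j=0}^{d−1} (U_j ⊗ 1_D) H_SE (U_j† ⊗ 1_D) = 1_d ⊗ J for some Hermitian D×D matrix J. -/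
open Matrix Complex
open scoped Kronecker

section helpers

lemma sum2r {D : ℕ} (a b : Fin D) (c1 c2 : ℂ) (f : Fin D → ℂ) :
    ∑ y, f y * (c1 * (if y = a then 1 else 0) + c2 * (if y = b then 1 else 0))
      = f a * c1 + f b * c2 := by
  simp [mul_add, mul_ite, ite_mul, mul_one, mul_zero, one_mul, zero_mul,
    Finset.sum_add_distrib, Finset.sum_ite_eq', mul_comm]

lemma sum2l {D : ℕ} (a b : Fin D) (c1 c2 : ℂ) (f : Fin D → ℂ) :
    ∑ y, (c1 * (if y = a then 1 else 0) + c2 * (if y = b then 1 else 0)) * f y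
      = c1 * f a + c2 * f b := by
  simp [add_mul, mul_ite, ite_mul, mul_one, mul_zero, one_mul, zero_mul,
    Finset.sum_add_distrib, Finset.sum_ite_eq']

lemma quad_two {D : ℕ} (M : Matrix (Fin D) (Fin D) ℂ) (a b : Fin D) (hab : a ≠ b)
    (c1 c2 : ℂ) :
    star (fun y => c1 * (if y = a then 1 else 0) + c2 * (if y = b then 1 else 0) : Fin D → ℂ)
      ⬝ᵥ M.mulVec (fun y => c1 * (if y = a then 1 else 0) + c2 * (if y = b then 1 else 0))
    = (starRingEnd ℂ) c1 * c1 * M a a + (starRingEnd ℂ) c1 * c2 * M a b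
      + (starRingEnd ℂ) c2 * c1 * M b a + (starRingEnd ℂ) c2 * c2 * M b b := by
  set ψ : Fin D → ℂ := fun y => c1 * (if y = a then 1 else 0) + c2 * (if y = b then 1 else 0)
    with hψ
  have hm : ∀ x, M.mulVec ψ x = M x a * c1 + M x b * c2 := fun x => by
    simp only [Matrix.mulVec, dotProduct, hψ]
    exact sum2r a b c1 c2 (M x)
  have hst : star ψ = fun y =>
      (starRingEnd ℂ) c1 * (if y = a then 1 else 0) + (starRingEnd ℂ) c2 * (if y = b then 1 else 0) := by
    funext y
    simp only [hψ, Pi.star_apply, star_add, star_mul', apply_ite (star : ℂ → ℂ), star_one,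
      star_zero, Complex.star_def, mul_comm]
  rw [dotProduct, hst]
  rw [sum2l a b _ _ (M.mulVec ψ), hm a, hm b]
  ring

lemma quad_unit {D : ℕ} (a b : Fin D) (hab : a ≠ b) (c1 c2 : ℂ)
    (hc : (starRingEnd ℂ) c1 * c1 + (starRingEnd ℂ) c2 * c2 = 1) :
    star (fun y => c1 * (if y = a then 1 else 0) + c2 * (if y = b then 1 else 0) : Fin D → ℂ)
      ⬝ᵥ (fun y => c1 * (if y = a then 1 else 0) + c2 * (if y = b then 1 else 0)) = 1 := by
  have h1 := quad_two (1 : Matrix (Fin D) (Fin D) ℂ) a b hab c1 c2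
  rw [Matrix.one_mulVec] at h1
  rw [h1, Matrix.one_apply_eq, Matrix.one_apply_eq, Matrix.one_apply_ne hab,
    Matrix.one_apply_ne hab.symm]
  linear_combination hc

lemma quad_diag {D : ℕ} (M : Matrix (Fin D) (Fin D) ℂ)
    (h : ∀ ψ : Fin D → ℂ, star ψ ⬝ᵥ ψ = 1 → star ψ ⬝ᵥ M.mulVec ψ = 0)
    (a : Fin D) : M a a = 0 := by
  have h1 := h (Pi.single a 1) (by
    simp [dotProduct, Pi.single_apply, apply_ite, Finset.sum_ite_eq'])
  simpa [dotProduct, Matrix.mulVec, Pi.single_apply, apply_ite, mul_ite, mul_one, mul_zero,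
    ite_mul, one_mul, zero_mul, Finset.sum_ite_eq', Finset.sum_ite_eq] using h1

lemma polarization {D : ℕ} (M : Matrix (Fin D) (Fin D) ℂ)
    (h : ∀ ψ : Fin D → ℂ, star ψ ⬝ᵥ ψ = 1 → star ψ ⬝ᵥ M.mulVec ψ = 0) : M = 0 := by
  have hdiag := quad_diag M h
  ext a b
  rcases eq_or_ne a b with rfl | hab
  · simpa using hdiag a
  · set s : ℂ := (((Real.sqrt 2)⁻¹ : ℝ) : ℂ) with hs
    have hsc : (starRingEnd ℂ) s = s := by rw [hs]; exact Complex.conj_ofReal _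
    have hs2 : s * s = 1/2 := by
      rw [hs, ← Complex.ofReal_mul]
      have : (Real.sqrt 2)⁻¹ * (Real.sqrt 2)⁻¹ = 1/2 := by
        rw [← mul_inv]
        rw [Real.mul_self_sqrt (by norm_num : (0:ℝ) ≤ 2)]
        norm_num
      rw [this]; norm_num
    have hc1 : (starRingEnd ℂ) s * s + (starRingEnd ℂ) s * s = 1 := by
      rw [hsc, hs2]; norm_num
    have h1 := h _ (quad_unit a b hab s s hc1)
    rw [quad_two M a b hab s s] at h1
    have hc2 : (starRingEnd ℂ) s * s + (starRingEnd ℂ) (s * Complex.I) * (s * Complex.I) = 1 := by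
      rw [_root_.map_mul, hsc, Complex.conj_I]
      rw [show s * -Complex.I * (s * Complex.I) = s * s * (-(Complex.I * Complex.I)) by ring]
      rw [Complex.I_mul_I, hs2]
      norm_num
    have h2 := h _ (quad_unit a b hab s (s * Complex.I) hc2)
    rw [quad_two M a b hab s (s * Complex.I)] at h2
    rw [hdiag a, hdiag b] at h1 h2
    rw [_root_.map_mul, hsc, Complex.conj_I] at h2
    rw [hsc] at h1
    have e1 : M a b + M b a = 0 := by
      linear_combination 2*h1 - 2*(M a b + M b a)*hs2
    have e2 : M a b - M b a = 0 := by
      linear_combination (-2*Complex.I)*h2 + (2*s*s*(M a b - M b a))*Complex.I_mul_I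
        - 2*(M a b - M b a)*hs2
    have : M a b = 0 := by linear_combination (e1 + e2) / 2
    simpa using this

lemma sum_swap3 {M : Type*} [AddCommMonoid M] {A B C : Type*} [Fintype A] [Fintype B]
    [Fintype C] (f : A → B → C → M) :
    ∑ a, ∑ b, ∑ c, f a b c = ∑ b, ∑ c, ∑ a, f a b c := by
  rw [Finset.sum_comm]
  exact Finset.sum_congr rfl fun b _ => Finset.sum_comm

lemma sum_swap4 {M : Type*} [AddCommMonoid M] {A B C E : Type*} [Fintype A] [Fintype B]
    [Fintype C] [Fintype E] (f : A → B → C → E → M) :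
    ∑ a, ∑ b, ∑ c, ∑ e, f a b c e = ∑ c, ∑ e, ∑ a, ∑ b, f a b c e :=
  calc ∑ a, ∑ b, ∑ c, ∑ e, f a b c e
      = ∑ a, ∑ c, ∑ b, ∑ e, f a b c e :=
        Finset.sum_congr rfl fun a _ => Finset.sum_comm
    _ = ∑ c, ∑ a, ∑ b, ∑ e, f a b c e := Finset.sum_comm
    _ = ∑ c, ∑ a, ∑ e, ∑ b, f a b c e :=
        Finset.sum_congr rfl fun c _ => Finset.sum_congr rfl fun a _ => Finset.sum_comm
    _ = ∑ c, ∑ e, ∑ a, ∑ b, f a b c e :=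
        Finset.sum_congr rfl fun c _ => Finset.sum_comm

lemma quadform_expand {n : ℕ} (M : Matrix (Fin n) (Fin n) ℂ) (x : Fin n → ℂ) :
    star x ⬝ᵥ M.mulVec x = ∑ p, ∑ q, star (x p) * M p q * x q := by
  simp only [dotProduct, Matrix.mulVec, Pi.star_apply, Finset.mul_sum]
  exact Finset.sum_congr rfl fun p _ => Finset.sum_congr rfl fun q _ => by ring

lemma sandwich {d : ℕ} (v : Fin d → Fin d → ℂ)
    (ho : ∀ i k, (∑ p, star (v i p) * v k p) = if i = k then (1:ℂ) else 0)
    (a b : Fin d → ℂ) (p q : Fin d) :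
    (∑ r, (∑ i, a i * (v i p * star (v i r))) * (∑ k, b k * (v k r * star (v k q))))
      = ∑ i, (a i * b i) * (v i p * star (v i q)) := by
  have step1 : ∀ r, (∑ i, a i * (v i p * star (v i r))) * (∑ k, b k * (v k r * star (v k q)))
      = ∑ i, ∑ k, ((a i * b k) * (v i p * star (v k q))) * (star (v i r) * v k r) := by
    intro r
    rw [Finset.sum_mul_sum]
    exact Finset.sum_congr rfl fun i _ => Finset.sum_congr rfl fun k _ => by ring
  simp_rw [step1]
  rw [sum_swap3]
  refine Finset.sum_congr rfl fun i _ => ?_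
  calc ∑ k, ∑ r, ((a i * b k) * (v i p * star (v k q))) * (star (v i r) * v k r)
      = ∑ k, ((a i * b k) * (v i p * star (v k q))) * ∑ r, star (v i r) * v k r :=
        Finset.sum_congr rfl fun k _ => (Finset.mul_sum _ _ _).symm
    _ = ∑ k, ((a i * b k) * (v i p * star (v k q))) * (if i = k then 1 else 0) := by
        simp_rw [ho]
    _ = (a i * b i) * (v i p * star (v i q)) := by
        simp [mul_ite, Finset.sum_ite_eq]

lemma sandwich2 {d D : ℕ} (v : Fin d → Fin d → ℂ)
    (H : Matrix (Fin d × Fin D) (Fin d × Fin D) ℂ) (a b : Fin D) (α β : Fin d → ℂ)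
    (p q : Fin d) :
    (∑ p', ∑ q', (∑ i, α i * (v i p * star (v i p'))) * H (p', a) (q', b) *
        (∑ k, β k * (v k q' * star (v k q))))
      = ∑ i, ∑ k, (α i * β k) * ((v i p * star (v k q)) *
          (∑ p', ∑ q', star (v i p') * H (p', a) (q', b) * v k q')) := by
  have step1 : ∀ p' q', (∑ i, α i * (v i p * star (v i p'))) * H (p', a) (q', b) *
      (∑ k, β k * (v k q' * star (v k q)))
      = ∑ i, ∑ k, (α i * β k) * ((v i p * star (v k q)) *
          (star (v i p') * H (p', a) (q', b) * v k q')) := by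
    intro p' q'
    rw [Finset.sum_mul, Finset.sum_mul_sum]
    exact Finset.sum_congr rfl fun i _ => Finset.sum_congr rfl fun k _ => by ring
  simp_rw [step1]
  rw [sum_swap4]
  refine Finset.sum_congr rfl fun i _ => Finset.sum_congr rfl fun k _ => ?_
  simp_rw [Finset.mul_sum]

end helpers

theorem stmt_2 {d D : ℕ} (hd : 0 < d)
    (HS : Matrix (Fin d) (Fin d) ℂ) (hHS : HS.IsHermitian)
    (hnt : ¬ ∃ c : ℂ, HS = c • (1 : Matrix (Fin d) (Fin d) ℂ))
    (HSE : Matrix (Fin d × Fin D) (Fin d × Fin D) ℂ) (hHSE : HSE.IsHermitian)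
    -- an orthonormal eigenbasis of H_S ...
    (v : Fin d → (Fin d → ℂ))
    (hortho : ∀ i j, star (v i) ⬝ᵥ v j = if i = j then (1 : ℂ) else 0)
    (heig : ∀ i, ∃ μ : ℝ, HS.mulVec (v i) = (μ : ℂ) • v i)
    -- ... whose diagonal entries of ⟨ψ|H_SE|ψ⟩_E are all equal, for every unit ψ
    (hdiag : ∀ ψ : Fin D → ℂ, star ψ ⬝ᵥ ψ = 1 →
      ∀ i j, star (v i) ⬝ᵥ (pexp HSE ψ).mulVec (v i) =
        star (v j) ⬝ᵥ (pexp HSE ψ).mulVec (v j))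
    -- the orthogonality condition for every unit ψ
    (horth : ∀ ψ : Fin D → ℂ, star ψ ⬝ᵥ ψ = 1 →
      Matrix.trace ((HS - (HS.trace / (d : ℂ)) • (1 : Matrix (Fin d) (Fin d) ℂ)) *
        pexp HSE ψ) = 0)
    -- ω = e^{2πi/d} and U_j = Σ_i ω^{ij} |v_i⟩⟨v_i|
    (ω : ℂ) (hω : ω = Complex.exp (2 * Real.pi * Complex.I / d))
    (U : Fin d → Matrix (Fin d) (Fin d) ℂ)
    (hUdef : ∀ j : Fin d, U j = ∑ i : Fin d,
      ω ^ (((i : ℕ) + 1) * (j : ℕ)) • Matrix.vecMulVec (v i) (star (v i))) :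
    -- the U_j are unitary
    (∀ j, U j * (U j)ᴴ = 1) ∧
    -- (1/d) Σ_j U_j H_S U_j† = H_S
    ((d : ℂ)⁻¹ • ∑ j, U j * HS * (U j)ᴴ = HS) ∧
    -- (1/d) Σ_j (U_j ⊗ 1) H_SE (U_j† ⊗ 1) = 1 ⊗ J for some Hermitian J
    (∃ J : Matrix (Fin D) (Fin D) ℂ, J.IsHermitian ∧
      (d : ℂ)⁻¹ • ∑ j, (U j ⊗ₖ (1 : Matrix (Fin D) (Fin D) ℂ)) * HSE *
        ((U j)ᴴ ⊗ₖ (1 : Matrix (Fin D) (Fin D) ℂ)) =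
        (1 : Matrix (Fin d) (Fin d) ℂ) ⊗ₖ J) := by
  classical
  have hdC : (d : ℂ) ≠ 0 := Nat.cast_ne_zero.mpr hd.ne'
  have hprim : IsPrimitiveRoot ω d := by
    rw [hω]; exact Complex.isPrimitiveRoot_exp d hd.ne'
  have hωne : ω ≠ 0 := by rw [hω]; exact Complex.exp_ne_zero _
  have hstarω : star ω = ω⁻¹ := by
    have h1 : star ω * ω = 1 := by
      rw [hω, Complex.star_def, ← Complex.exp_conj, ← Complex.exp_add]
      rw [show (starRingEnd ℂ) (2 * (Real.pi : ℂ) * Complex.I / (d : ℂ))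
          + 2 * (Real.pi : ℂ) * Complex.I / (d : ℂ) = 0 from by
        rw [map_div₀, _root_.map_mul, _root_.map_mul, Complex.conj_I, Complex.conj_ofReal,
          map_ofNat, map_natCast]
        ring]
      exact Complex.exp_zero
    exact eq_inv_of_mul_eq_one_left h1
  have hconjn : ∀ n : ℕ, star (ω ^ n) * ω ^ n = 1 := fun n => by
    rw [star_pow, hstarω, inv_pow, inv_mul_cancel₀ (pow_ne_zero n hωne)]
  have hortho' : ∀ i k, (∑ p, star (v i p) * v k p) = if i = k then (1:ℂ) else 0 :=
    fun i k => by simpa [dotProduct] using hortho i k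
  have hcomp : ∀ p q, (∑ i, v i p * star (v i q)) = if p = q then (1:ℂ) else 0 := by
    have h1 : (Matrix.of fun p i => v i p)ᴴ * (Matrix.of fun p i => v i p) = 1 := by
      ext i k
      rw [Matrix.mul_apply]
      simp only [Matrix.conjTranspose_apply, Matrix.of_apply, Matrix.one_apply]
      exact hortho' i k
    have h2 := mul_eq_one_comm.mp h1
    intro p q
    have h3 := congrFun (congrFun h2 p) q
    rw [Matrix.mul_apply] at h3
    simpa [Matrix.conjTranspose_apply, Matrix.one_apply] using h3
  have hU : ∀ j p p', U j p p' = ∑ i : Fin d, ω ^ (((i : ℕ) + 1) * (j : ℕ)) *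
      (v i p * star (v i p')) := by
    intro j p p'
    rw [hUdef j]
    simp [Matrix.sum_apply, Matrix.vecMulVec_apply, smul_eq_mul]
  have hUH : ∀ j p' q, (U j)ᴴ p' q = ∑ k : Fin d, star (ω ^ (((k : ℕ) + 1) * (j : ℕ))) *
      (v k p' * star (v k q)) := by
    intro j p' q
    rw [Matrix.conjTranspose_apply, hU j q p', star_sum]
    refine Finset.sum_congr rfl fun k _ => ?_
    simp only [star_mul', star_star]
    ring
  have hne1 : ∀ i k : Fin d, i ≠ k → ω ^ ((i : ℕ) + 1) ≠ ω ^ ((k : ℕ) + 1) := by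
    have key : ∀ m n : ℕ, 0 < m → m < n → n ≤ d → ω ^ m ≠ ω ^ n := by
      intro m n hm0 hmn hnd he
      have h1 : ω ^ m * ω ^ (n - m) = ω ^ m * 1 := by
        rw [← pow_add, mul_one, show m + (n - m) = n by omega]
        exact he.symm
      have h2 : ω ^ (n - m) = 1 := mul_left_cancel₀ (pow_ne_zero m hωne) h1
      have h3 := hprim.dvd_of_pow_eq_one _ h2
      have h4 := Nat.le_of_dvd (by omega) h3
      omega
    intro i k hik heq
    have hv : (i : ℕ) ≠ (k : ℕ) := fun h => hik (Fin.ext h)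
    have hid := i.isLt
    have hkd := k.isLt
    rcases lt_or_gt_of_ne hv with h | h
    · exact key _ _ (by omega) (by omega) (by omega) heq
    · exact key _ _ (by omega) (by omega) (by omega) heq.symm
  have hgeom : ∀ i k : Fin d,
      (∑ j : Fin d, ω ^ (((i : ℕ) + 1) * (j : ℕ)) * star (ω ^ (((k : ℕ) + 1) * (j : ℕ))))
        = if i = k then (d : ℂ) else 0 := by
    intro i k
    set ζ : ℂ := ω ^ ((i : ℕ) + 1) * (ω ^ ((k : ℕ) + 1))⁻¹ with hζ
    have hterm : ∀ j : Fin d,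
        ω ^ (((i : ℕ) + 1) * (j : ℕ)) * star (ω ^ (((k : ℕ) + 1) * (j : ℕ))) = ζ ^ (j : ℕ) := by
      intro j
      rw [star_pow, hstarω, hζ, mul_pow, ← inv_pow, ← pow_mul, ← pow_mul]
    rw [Finset.sum_congr rfl fun j _ => hterm j]
    rw [Fin.sum_univ_eq_sum_range (fun n => ζ ^ n) d]
    rcases eq_or_ne i k with rfl | hik
    · have : ζ = 1 := by
        rw [hζ, mul_inv_cancel₀ (pow_ne_zero _ hωne)]
      simp [this]
    · have hζ1 : ζ ≠ 1 := by
        intro h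
        apply hne1 i k hik
        rw [hζ] at h
        field_simp at h
        exact h
      have hζd : ζ ^ d = 1 := by
        rw [hζ, mul_pow, inv_pow, ← pow_mul, ← pow_mul, mul_comm ((i : ℕ) + 1) d,
          mul_comm ((k : ℕ) + 1) d, pow_mul, pow_mul, hprim.pow_eq_one, one_pow, one_pow,
          inv_one, mul_one]
      rw [geom_sum_eq hζ1, hζd, sub_self, zero_div, if_neg hik]
  -- Part 1
  have hunit : ∀ j, U j * (U j)ᴴ = 1 := by
    intro j
    ext p q
    rw [Matrix.mul_apply]
    simp_rw [hU, hUH]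
    rw [sandwich v hortho' _ _ p q]
    calc ∑ i : Fin d, (ω ^ (((i : ℕ) + 1) * (j : ℕ)) * star (ω ^ (((i : ℕ) + 1) * (j : ℕ)))) *
          (v i p * star (v i q))
        = ∑ i, v i p * star (v i q) := by
          refine Finset.sum_congr rfl fun i _ => ?_
          rw [mul_comm (ω ^ _) (star _), hconjn, one_mul]
      _ = (1 : Matrix (Fin d) (Fin d) ℂ) p q := by rw [hcomp p q, Matrix.one_apply]
  -- eigenvalues
  choose μ hμ using heig
  have hHSe : ∀ p q, HS p q = ∑ i, (μ i : ℂ) * (v i p * star (v i q)) := by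
    intro p q
    have e0 : HS p q = ∑ r, HS p r * (if r = q then (1:ℂ) else 0) := by
      simp [mul_ite, Finset.sum_ite_eq']
    rw [e0]
    have h0 : ∀ r, (if r = q then (1:ℂ) else 0) = ∑ k, v k r * star (v k q) :=
      fun r => (hcomp r q).symm
    simp_rw [h0, Finset.mul_sum]
    rw [Finset.sum_comm]
    refine Finset.sum_congr rfl fun k _ => ?_
    have h1 : ∑ r, HS p r * v k r = (μ k : ℂ) * v k p := by
      have h2 := congrFun (hμ k) p
      simpa [Matrix.mulVec, dotProduct, smul_eq_mul] using h2
    calc ∑ r, HS p r * (v k r * star (v k q))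
        = (∑ r, HS p r * v k r) * star (v k q) := by
          rw [Finset.sum_mul]
          exact Finset.sum_congr rfl fun r _ => by ring
      _ = (μ k : ℂ) * (v k p * star (v k q)) := by rw [h1]; ring
  -- Part 2
  have hUHSU : ∀ j, U j * HS * (U j)ᴴ = HS := by
    intro j
    have e1 : ∀ p q', (U j * HS) p q' = ∑ i : Fin d, (ω ^ (((i : ℕ) + 1) * (j : ℕ)) * (μ i : ℂ)) *
        (v i p * star (v i q')) := by
      intro p q'
      rw [Matrix.mul_apply]
      simp_rw [hU, hHSe]
      exact sandwich v hortho' _ _ p q'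
    ext p q
    rw [Matrix.mul_apply]
    simp_rw [e1, hUH]
    rw [sandwich v hortho' _ _ p q, hHSe p q]
    refine Finset.sum_congr rfl fun i _ => ?_
    have h3 := hconjn ((((i : ℕ)) + 1) * (j : ℕ))
    linear_combination ((μ i : ℂ) * (v i p * star (v i q))) * h3
  have hpart2 : (d : ℂ)⁻¹ • ∑ j, U j * HS * (U j)ᴴ = HS := by
    rw [Finset.sum_congr rfl fun j _ => hUHSU j]
    rw [Finset.sum_const, Finset.card_univ, Fintype.card_fin,
      ← Nat.cast_smul_eq_nsmul ℂ, smul_smul, inv_mul_cancel₀ hdC, one_smul]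
  refine ⟨hunit, hpart2, ?_⟩
  -- Part 3
  set B : Fin d → Matrix (Fin D) (Fin D) ℂ := fun i => Matrix.of fun a b =>
    ∑ p, ∑ q, star (v i p) * HSE (p, a) (q, b) * v i q with hB
  have hE : ∀ x y : Fin d × Fin D, star (HSE y x) = HSE x y := by
    intro x y
    rw [← Matrix.conjTranspose_apply, hHSE]
  have hBHerm : ∀ i, (B i).IsHermitian := by
    intro i
    ext a b
    rw [Matrix.conjTranspose_apply, hB]
    simp only [Matrix.of_apply]
    rw [star_sum]
    calc ∑ p, star (∑ q, star (v i p) * HSE (p, b) (q, a) * v i q)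
        = ∑ p, ∑ q, star (v i q) * HSE (q, a) (p, b) * v i p := by
          refine Finset.sum_congr rfl fun p _ => ?_
          rw [star_sum]
          refine Finset.sum_congr rfl fun q _ => ?_
          simp only [star_mul', star_star]
          rw [hE (q, a) (p, b)]
          ring
      _ = ∑ p, ∑ q, star (v i p) * HSE (p, a) (q, b) * v i q := Finset.sum_comm
  have hBpsi : ∀ i (ψ : Fin D → ℂ), star (v i) ⬝ᵥ (pexp HSE ψ).mulVec (v i)
      = star ψ ⬝ᵥ (B i).mulVec ψ := by
    intro i ψ
    rw [quadform_expand, quadform_expand]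
    simp only [pexp, hB, Matrix.of_apply]
    simp_rw [Finset.mul_sum, Finset.sum_mul]
    rw [sum_swap4]
    refine Finset.sum_congr rfl fun a _ => Finset.sum_congr rfl fun b _ =>
      Finset.sum_congr rfl fun p _ => Finset.sum_congr rfl fun q _ => by ring
  have hBeq : ∀ i k, B i = B k := by
    intro i k
    have h0 := polarization (B i - B k) (fun ψ hψ => by
      have h := hdiag ψ hψ i k
      rw [hBpsi i ψ, hBpsi k ψ] at h
      rw [Matrix.sub_mulVec, dotProduct_sub, h, sub_self])
    exact sub_eq_zero.mp h0
  refine ⟨B ⟨0, hd⟩, hBHerm _, ?_⟩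
  ext x y
  obtain ⟨p, a⟩ := x
  obtain ⟨q, b⟩ := y
  rw [Matrix.smul_apply, Matrix.sum_apply, smul_eq_mul]
  have hMj : ∀ j, ((U j ⊗ₖ (1 : Matrix (Fin D) (Fin D) ℂ)) * HSE *
      ((U j)ᴴ ⊗ₖ (1 : Matrix (Fin D) (Fin D) ℂ))) (p, a) (q, b)
      = ∑ i : Fin d, ∑ k : Fin d, (ω ^ (((i : ℕ) + 1) * (j : ℕ)) * star (ω ^ (((k : ℕ) + 1) * (j : ℕ)))) *
          ((v i p * star (v k q)) *
            (∑ p', ∑ q', star (v i p') * HSE (p', a) (q', b) * v k q')) := by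
    intro j
    have hL : ∀ y : Fin d × Fin D, ((U j ⊗ₖ (1 : Matrix (Fin D) (Fin D) ℂ)) * HSE) (p, a) y
        = ∑ p', U j p p' * HSE (p', a) y := by
      intro y
      rw [Matrix.mul_apply, Fintype.sum_prod_type]
      refine Finset.sum_congr rfl fun p' _ => ?_
      simp [Matrix.kroneckerMap_apply, Matrix.one_apply, ite_mul, mul_ite, mul_assoc,
        Finset.sum_ite_eq]
    rw [Matrix.mul_apply, Fintype.sum_prod_type]
    simp only [Matrix.kroneckerMap_apply, Matrix.one_apply]
    have step : ∀ q', (∑ b' : Fin D, ((U j ⊗ₖ (1 : Matrix (Fin D) (Fin D) ℂ)) * HSE) (p, a) (q', b') *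
        ((U j)ᴴ q' q * if b' = b then (1:ℂ) else 0))
        = ((U j ⊗ₖ (1 : Matrix (Fin D) (Fin D) ℂ)) * HSE) (p, a) (q', b) * (U j)ᴴ q' q := by
      intro q'
      simp [mul_ite, Finset.sum_ite_eq']
    rw [Finset.sum_congr rfl fun q' _ => step q']
    simp_rw [hL, Finset.sum_mul]
    rw [Finset.sum_comm]
    simp_rw [hU, hUH]
    exact sandwich2 v HSE a b _ _ p q
  rw [Finset.sum_congr rfl fun j _ => hMj j]
  rw [sum_swap3]
  have factor : ∀ i k : Fin d, (∑ j : Fin d,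
      (ω ^ (((i : ℕ) + 1) * (j : ℕ)) * star (ω ^ (((k : ℕ) + 1) * (j : ℕ)))) *
        ((v i p * star (v k q)) * (∑ p', ∑ q', star (v i p') * HSE (p', a) (q', b) * v k q')))
      = (if i = k then (d : ℂ) else 0) *
        ((v i p * star (v k q)) * (∑ p', ∑ q', star (v i p') * HSE (p', a) (q', b) * v k q')) := by
    intro i k
    rw [← Finset.sum_mul, hgeom]
  rw [Finset.sum_congr rfl fun i _ => Finset.sum_congr rfl fun k _ => factor i k]
  have collapse : ∀ i : Fin d, (∑ k, (if i = k then (d : ℂ) else 0) *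
      ((v i p * star (v k q)) * (∑ p', ∑ q', star (v i p') * HSE (p', a) (q', b) * v k q')))
      = (d : ℂ) * ((v i p * star (v i q)) * B i a b) := by
    intro i
    simp [ite_mul, Finset.sum_ite_eq, hB]
  rw [Finset.sum_congr rfl fun i _ => collapse i]
  have hBJ : ∀ i, B i a b = B ⟨0, hd⟩ a b := fun i => by rw [hBeq i ⟨0, hd⟩]
  have last : ∑ i : Fin d, (d : ℂ) * (v i p * star (v i q) * B i a b)
      = (d : ℂ) * ((if p = q then (1:ℂ) else 0) * B ⟨0, hd⟩ a b) :=
    calc ∑ i : Fin d, (d : ℂ) * (v i p * star (v i q) * B i a b)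
        = ∑ i : Fin d, ((d : ℂ) * B ⟨0, hd⟩ a b) * (v i p * star (v i q)) := by
          refine Finset.sum_congr rfl fun i _ => ?_
          rw [hBJ i]; ring
      _ = ((d : ℂ) * B ⟨0, hd⟩ a b) * ∑ i : Fin d, v i p * star (v i q) :=
          (Finset.mul_sum _ _ _).symm
      _ = (d : ℂ) * ((if p = q then (1:ℂ) else 0) * B ⟨0, hd⟩ a b) := by
          rw [hcomp p q]; ring
  rw [last, Matrix.kroneckerMap_apply, Matrix.one_apply, ← mul_assoc,
    inv_mul_cancel₀ hdC, one_mul]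
end

section
/- Let G be a Hermitian operator on a finite-dimensional nonzero complex inner product space, with smallest eigenvalue μ_min and largest eigenvalue μ_max. Then for every unit vector ψ, the variance Var[G]_ψ := ⟨ψ, G² ψ⟩ − ⟨ψ, G ψ⟩² satisfies Var[G]_ψ ≤ (μ_max − μ_min)² / 4. -/
/-!
Shifting `G` by a real constant `c` does not change the variance, and
`Var[G]_ψ = ‖(G - c) ψ‖² - (⟨ψ, G ψ⟩ - c)² ≤ ‖G - c‖²`. For `c` the midpoint of `[μ_min, μ_max]`,
the spectrum of the self-adjoint operator `G - c` lies in `[-Δ, Δ]` with `Δ = (μ_max - μ_min) / 2`,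
and the norm of a self-adjoint element of a C⋆-algebra is attained on its spectrum, so `‖G - c‖ ≤ Δ`.
-/

open scoped InnerProductSpace

theorem IsSelfAdjoint.norm_sub_algebraMap_midpoint_le {A : Type*} [CStarAlgebra A] [Nontrivial A]
    {a : A} (ha : IsSelfAdjoint a) {lo hi : ℝ} (h : spectrum ℝ a ⊆ Set.Icc lo hi) :
    ‖a - algebraMap ℝ A ((lo + hi) / 2)‖ ≤ (hi - lo) / 2 := by
  have hb : IsSelfAdjoint (a - algebraMap ℝ A ((lo + hi) / 2)) :=
    ha.sub (.algebraMap A (.all _))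
  have hspec : ∀ x ∈ spectrum ℝ (a - algebraMap ℝ A ((lo + hi) / 2)), |x| ≤ (hi - lo) / 2 := by
    rw [← spectrum.sub_singleton_eq]
    rintro _ ⟨μ, hμ, c, rfl, rfl⟩
    obtain ⟨hlo, hhi⟩ := h hμ
    rw [abs_le]
    constructor <;> linarith
  rcases CStarAlgebra.norm_or_neg_norm_mem_spectrum hb with hmem | hmem <;>
    simpa using hspec _ hmem

theorem LinearMap.IsSymmetric.re_variance_eq {𝕜 E : Type*} [RCLike 𝕜] [NormedAddCommGroup E]
    [InnerProductSpace 𝕜 E] {T : E →ₗ[𝕜] E} (hT : T.IsSymmetric) {ψ : E} (hψ : ‖ψ‖ = 1) (c : ℝ) :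
    RCLike.re (⟪ψ, T (T ψ)⟫_𝕜 - ⟪ψ, T ψ⟫_𝕜 ^ 2) =
      ‖T ψ - (c : 𝕜) • ψ‖ ^ 2 - (RCLike.re ⟪ψ, T ψ⟫_𝕜 - c) ^ 2 := by
  set m := RCLike.re ⟪ψ, T ψ⟫_𝕜
  have hmean : ⟪T ψ, ψ⟫_𝕜 = m := by rw [← hT.coe_re_inner_apply_self, hT]
  have hsq : ⟪ψ, T (T ψ)⟫_𝕜 = (‖T ψ‖ ^ 2 : ℝ) := by
    rw [← hT, inner_self_eq_norm_sq_to_K]; push_cast; rfl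
  rw [← hT ψ ψ, hmean, hsq, @norm_sub_sq 𝕜, inner_smul_right, hmean, norm_smul, hψ]
  simp only [← RCLike.ofReal_pow, ← RCLike.ofReal_mul, ← RCLike.ofReal_sub, RCLike.ofReal_re,
    RCLike.norm_ofReal, mul_one, sq_abs]
  ring

theorem stmt_7 {E : Type*} [NormedAddCommGroup E] [InnerProductSpace ℂ E]
    [FiniteDimensional ℂ E] [Nontrivial E]
    (G : E →L[ℂ] E) (hG : ∀ φ φ' : E, ⟪φ, G φ'⟫_ℂ = ⟪G φ, φ'⟫_ℂ)
    (μmin μmax : ℝ)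
    (hmin : IsLeast {μ : ℝ | (μ : ℂ) ∈ spectrum ℂ G} μmin)
    (hmax : IsGreatest {μ : ℝ | (μ : ℂ) ∈ spectrum ℂ G} μmax) :
    ∀ ψ : E, ‖ψ‖ = 1 →
      (⟪ψ, G (G ψ)⟫_ℂ - ⟪ψ, G ψ⟫_ℂ ^ 2).re ≤ (μmax - μmin) ^ 2 / 4 := by
  intro ψ hψ
  have hsymm : (G : E →ₗ[ℂ] E).IsSymmetric := fun φ φ' ↦ (hG φ φ').symm
  have hspec : spectrum ℝ G ⊆ Set.Icc μmin μmax := by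
    rw [← spectrum.preimage_algebraMap ℂ]
    exact fun μ hμ ↦ ⟨hmin.2 hμ, hmax.2 hμ⟩
  set c := (μmin + μmax) / 2
  have hnorm : ‖G ψ - (c : ℂ) • ψ‖ ≤ (μmax - μmin) / 2 := calc
    ‖G ψ - (c : ℂ) • ψ‖ = ‖(G - algebraMap ℝ (E →L[ℂ] E) c) ψ‖ := by
      simp [Algebra.algebraMap_eq_smul_one]
    _ ≤ ‖G - algebraMap ℝ (E →L[ℂ] E) c‖ := by
      simpa [hψ] using (G - algebraMap ℝ (E →L[ℂ] E) c).le_opNorm ψ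
    _ ≤ (μmax - μmin) / 2 :=
      (ContinuousLinearMap.isSelfAdjoint_iff_isSymmetric.2 hsymm).norm_sub_algebraMap_midpoint_le
        hspec
  calc (⟪ψ, G (G ψ)⟫_ℂ - ⟪ψ, G ψ⟫_ℂ ^ 2).re
      = ‖G ψ - (c : ℂ) • ψ‖ ^ 2 - ((⟪ψ, G ψ⟫_ℂ).re - c) ^ 2 := hsymm.re_variance_eq hψ c
    _ ≤ ((μmax - μmin) / 2) ^ 2 :=
      (sub_le_self _ (sq_nonneg _)).trans (pow_le_pow_left₀ (norm_nonneg _) hnorm 2)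
    _ = (μmax - μmin) ^ 2 / 4 := by ring
end

section
/- Let λ > 0, γ_0 > 0, Δ ∈ ℝ, set δ := λ − iΔ ∈ ℂ, and let d ∈ ℂ with d² = δ² − 2γ_0 λ and d ≠ 0. Fix c_0 ∈ ℂ and define c : ℝ → ℂ by c(t) := c_0 · e^{−δ t/2} · ( cosh(dt/2) + (δ/d) sinh(dt/2) ). Then for every t ≥ 0, c'(t) = −∫_0^t (γ_0 λ / 2) e^{−δ (t−τ)} c(τ) dτ, and c(0) = c_0. -/
/-!
Write `A(z) = exp (-δ z / 2) (cosh (d z / 2) + (δ / d) sinh (d z / 2))`. Differentiating, the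
cosh terms cancel and `A' = ((d² - δ²) / (2 d)) exp (-δ z / 2) sinh (d z / 2)`. On the other side,
`exp (-δ (t - τ)) A(τ) = exp (-δ t) · exp (δ τ / 2) (cosh (d τ / 2) + (δ / d) sinh (d τ / 2))`, and
the last factor is the derivative of `(2 / d) exp (δ τ / 2) sinh (d τ / 2)`; so the memory integral
equals `(2 / d) exp (-δ t / 2) sinh (d t / 2)`, and `A' = ((d² - δ²) / 4) ∫₀ᵗ exp (-δ (t - τ)) A(τ) dτ`.
With `d² - δ² = -2 γ₀ λ` this is the integro-differential equation with kernel `(γ₀ λ / 2) e^{-δ s}`.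
-/

open Complex

noncomputable def dampedAmplitude (δ d z : ℂ) : ℂ :=
  exp (-δ * z / 2) * (cosh (d * z / 2) + δ / d * sinh (d * z / 2))

section

variable {δ d : ℂ}

@[simp]
theorem dampedAmplitude_zero : dampedAmplitude δ d 0 = 1 := by
  simp [dampedAmplitude]

theorem hasDerivAt_dampedAmplitude (hd : d ≠ 0) (z : ℂ) :
    HasDerivAt (dampedAmplitude δ d)
      ((d ^ 2 - δ ^ 2) / (2 * d) * exp (-δ * z / 2) * sinh (d * z / 2)) z := by
  have hE : HasDerivAt (fun z => exp (-δ * z / 2)) (exp (-δ * z / 2) * (-δ / 2)) z :=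
    (((hasDerivAt_id z).const_mul (-δ)).div_const 2).cexp.congr_deriv (by simp)
  have hdz : HasDerivAt (fun z => d * z / 2) (d / 2) z := by
    simpa using ((hasDerivAt_id z).const_mul d).div_const 2
  refine (hE.fun_mul (hdz.ccosh.fun_add (hdz.csinh.const_mul (δ / d)))).congr_deriv ?_
  field_simp
  ring

theorem integral_exp_mul_dampedAmplitude (hd : d ≠ 0) (t : ℝ) :
    ∫ τ in (0 : ℝ)..t, exp (-δ * (t - τ)) * dampedAmplitude δ d τ
      = 2 / d * exp (-δ * t / 2) * sinh (d * t / 2) := by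
  have hprim : ∀ τ : ℝ, HasDerivAt (fun τ : ℝ => 2 / d * exp (δ * τ / 2) * sinh (d * τ / 2))
      (exp (δ * τ / 2) * (cosh (d * τ / 2) + δ / d * sinh (d * τ / 2))) τ := by
    intro τ
    have hdz : ∀ a : ℂ, HasDerivAt (fun z => a * z / 2) (a / 2) (τ : ℂ) := fun a => by
      simpa using ((hasDerivAt_id (τ : ℂ)).const_mul a).div_const 2
    refine ((((hdz δ).cexp.const_mul (2 / d)).fun_mul (hdz d).csinh).comp_ofReal).congr_deriv ?_
    field_simp
    ring
  have hsplit : ∀ τ : ℝ, exp (-δ * (t - τ)) * dampedAmplitude δ d τ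
      = exp (-δ * t) * (exp (δ * τ / 2) * (cosh (d * τ / 2) + δ / d * sinh (d * τ / 2))) := by
    intro τ
    rw [dampedAmplitude, ← mul_assoc, ← mul_assoc, ← exp_add, ← exp_add]
    ring_nf
  simp_rw [hsplit]
  rw [intervalIntegral.integral_const_mul,
    intervalIntegral.integral_eq_sub_of_hasDerivAt (fun τ _ => hprim τ)
      (by apply Continuous.intervalIntegrable; fun_prop)]
  have hexp : exp (-δ * t) * exp (δ * t / 2) = exp (-δ * t / 2) := by
    rw [← exp_add]; ring_nf
  simp only [ofReal_zero, mul_zero, zero_div, sinh_zero, sub_zero]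
  linear_combination 2 / d * sinh (d * t / 2) * hexp

theorem hasDerivAt_dampedAmplitude_ofReal (hd : d ≠ 0) (t : ℝ) :
    HasDerivAt (fun t : ℝ => dampedAmplitude δ d t)
      ((d ^ 2 - δ ^ 2) / 4 * ∫ τ in (0 : ℝ)..t, exp (-δ * (t - τ)) * dampedAmplitude δ d τ) t := by
  convert (hasDerivAt_dampedAmplitude hd t).comp_ofReal using 1
  rw [integral_exp_mul_dampedAmplitude hd]
  field_simp
  ring

end

theorem stmt_13_general (lam γ₀ : ℝ)
    (δ : ℂ)
    (d : ℂ) (hd2 : d ^ 2 = δ ^ 2 - 2 * (γ₀ : ℂ) * (lam : ℂ)) (hd : d ≠ 0)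
    (c₀ : ℂ) (c : ℝ → ℂ)
    (hc : ∀ t : ℝ, c t = c₀ * Complex.exp (-δ * (t : ℂ) / 2) *
      (Complex.cosh (d * (t : ℂ) / 2) + (δ / d) * Complex.sinh (d * (t : ℂ) / 2))) :
    c 0 = c₀ ∧
    ∀ t : ℝ, 0 ≤ t →
      HasDerivAt c
        (-(∫ τ in (0 : ℝ)..t,
            ((γ₀ : ℂ) * (lam : ℂ) / 2) * Complex.exp (-δ * ((t : ℂ) - (τ : ℂ))) * c τ)) t := by
  have hc' : c = fun t : ℝ => c₀ * dampedAmplitude δ d t := by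
    ext t
    rw [hc, dampedAmplitude, mul_assoc]
  subst hc'
  refine ⟨by simp, fun t _ => ?_⟩
  refine ((hasDerivAt_dampedAmplitude_ofReal hd t).const_mul c₀).congr_deriv ?_
  have hkernel : ∀ τ : ℝ, (γ₀ : ℂ) * lam / 2 * exp (-δ * (t - τ)) * (c₀ * dampedAmplitude δ d τ)
      = γ₀ * lam / 2 * c₀ * (exp (-δ * (t - τ)) * dampedAmplitude δ d τ) := fun τ => by ring
  simp only [hkernel, intervalIntegral.integral_const_mul]
  linear_combination (c₀ / 4 * ∫ τ in (0 : ℝ)..t, exp (-δ * (t - τ)) * dampedAmplitude δ d τ) * hd2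

theorem stmt_13 (lam γ₀ Δ : ℝ) (hlam : 0 < lam) (hγ₀ : 0 < γ₀)
    (δ : ℂ) (hδ : δ = (lam : ℂ) - Complex.I * (Δ : ℂ))
    (d : ℂ) (hd2 : d ^ 2 = δ ^ 2 - 2 * (γ₀ : ℂ) * (lam : ℂ)) (hd : d ≠ 0)
    (c₀ : ℂ) (c : ℝ → ℂ)
    (hc : ∀ t : ℝ, c t = c₀ * Complex.exp (-δ * (t : ℂ) / 2) *
      (Complex.cosh (d * (t : ℂ) / 2) + (δ / d) * Complex.sinh (d * (t : ℂ) / 2))) :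
    c 0 = c₀ ∧
    ∀ t : ℝ, 0 ≤ t →
      HasDerivAt c
        (-(∫ τ in (0 : ℝ)..t,
            ((γ₀ : ℂ) * (lam : ℂ) / 2) * Complex.exp (-δ * ((t : ℂ) - (τ : ℂ))) * c τ)) t :=
  stmt_13_general lam γ₀ δ d hd2 hd c₀ c hc
end

section
/- Let δ, d, T ∈ ℂ with d ≠ 0, s := sinh(dT/2), h := cosh(dT/2), and M := [[h + (δ/d)s, −(2/d)s], [((d/2) − δ²/(2d)) s, (δ/d)s − h]]. Let K ∈ ℂ satisfy K² = d² + δ² s² and K ≠ 0, and set η_± := (δ s ± K)/d. Then for every n ∈ ℕ, M^n = [ (η_+^n − η_−^n) M − (η_− η_+^n − η_+ η_−^n) · 1 ] / (η_+ − η_−), where 1 is the 2×2 identity matrix. -/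
/-! The transfer matrix has trace `η₊ + η₋` and determinant `η₊ η₋ = -1`, so by Cayley–Hamilton
it satisfies `M² = (η₊ + η₋) M - η₊ η₋`. Any element `x` of an algebra obeying such a quadratic
relation with distinct roots `a ≠ b` has `(a - b) xⁿ = (aⁿ - bⁿ) x - (b aⁿ - a bⁿ)`, by induction
on `n`; dividing by `η₊ - η₋ = 2K/d ≠ 0` gives the formula. -/

open Matrix Complex

theorem sub_smul_pow_of_mul_self_eq {R A : Type*} [CommRing R] [Ring A] [Algebra R A]
    {a b : R} {x : A} (hx : x * x = (a + b) • x - (a * b) • (1 : A)) (n : ℕ) :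
    (a - b) • x ^ n = (a ^ n - b ^ n) • x - (b * a ^ n - a * b ^ n) • (1 : A) := by
  induction n with
  | zero => simp only [pow_zero, mul_one, sub_self, zero_smul, zero_sub, sub_smul, neg_sub]
  | succ n ih =>
    calc (a - b) • x ^ (n + 1) = ((a - b) • x ^ n) * x := by rw [pow_succ, smul_mul_assoc]
      _ = (a ^ n - b ^ n) • (x * x) - (b * a ^ n - a * b ^ n) • x := by
        rw [ih, sub_mul, smul_mul_assoc, smul_mul_assoc, one_mul]
      _ = (a ^ (n + 1) - b ^ (n + 1)) • x - (b * a ^ (n + 1) - a * b ^ (n + 1)) • (1 : A) := by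
        rw [hx]; module

theorem pow_eq_of_mul_self_eq {K A : Type*} [Field K] [Ring A] [Algebra K A] {a b : K} {x : A}
    (hx : x * x = (a + b) • x - (a * b) • (1 : A)) (hab : a ≠ b) (n : ℕ) :
    x ^ n = (a - b)⁻¹ • ((a ^ n - b ^ n) • x - (b * a ^ n - a * b ^ n) • (1 : A)) := by
  rw [← sub_smul_pow_of_mul_self_eq hx, inv_smul_smul₀ (sub_ne_zero.2 hab)]

theorem Matrix.mul_self_eq_trace_smul_sub_det {R : Type*} [CommRing R]
    (M : Matrix (Fin 2) (Fin 2) R) :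
    M * M = M.trace • M - M.det • (1 : Matrix (Fin 2) (Fin 2) R) := by
  ext i j
  fin_cases i <;> fin_cases j <;>
    simp only [Fin.zero_eta, Fin.mk_one, Fin.isValue, mul_apply, Fin.sum_univ_two, trace_fin_two,
      det_fin_two, sub_apply, smul_apply, smul_eq_mul, one_apply_eq, one_apply_ne zero_ne_one,
      one_apply_ne one_ne_zero, mul_one, mul_zero, sub_zero] <;>
    ring

theorem stmt_17 (δ d T : ℂ) (hd : d ≠ 0)
    (s h : ℂ) (hs : s = Complex.sinh (d * T / 2)) (hh : h = Complex.cosh (d * T / 2))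
    (M : Matrix (Fin 2) (Fin 2) ℂ)
    (hM : M = !![h + (δ / d) * s, -(2 / d) * s;
                 (d / 2 - δ ^ 2 / (2 * d)) * s, (δ / d) * s - h])
    (K : ℂ) (hK2 : K ^ 2 = d ^ 2 + δ ^ 2 * s ^ 2) (hK : K ≠ 0)
    (ηp ηm : ℂ) (hηp : ηp = (δ * s + K) / d) (hηm : ηm = (δ * s - K) / d) :
    ∀ n : ℕ,
      M ^ n = (ηp - ηm)⁻¹ •
        ((ηp ^ n - ηm ^ n) • M -
          (ηm * ηp ^ n - ηp * ηm ^ n) • (1 : Matrix (Fin 2) (Fin 2) ℂ)) := by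
  have hhs : h ^ 2 - s ^ 2 = 1 := by rw [hs, hh]; exact cosh_sq_sub_sinh_sq _
  have htrace : M.trace = ηp + ηm := by
    rw [hM, trace_fin_two_of, hηp, hηm]; ring
  have hdet : M.det = ηp * ηm := by
    rw [hM, det_fin_two_of, hηp, hηm]
    field_simp
    linear_combination (-d ^ 2) * hhs + hK2
  have hne : ηp ≠ ηm := by
    rw [hηp, hηm]
    intro heq
    exact hK (by field_simp at heq; linear_combination heq / 2)
  have hMM : M * M = (ηp + ηm) • M - (ηp * ηm) • (1 : Matrix (Fin 2) (Fin 2) ℂ) := by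
    rw [M.mul_self_eq_trace_smul_sub_det, htrace, hdet]
  exact pow_eq_of_mul_self_eq hMM hne
end
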